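/- Let q ≥ 2 and m ≥ 1 be integers and set K := (q^m − 1)/(q − 1). For 0 ≤ r < q let A_r = [[J_{r0}, J_{r1}],[0, B_r]] be a block matrix, where J_{r0} is a K×K upper triangular complex matrix with zeros on the diagonal, J_{r1} is a K×q^m complex matrix, and B_r is a q^m×q^m complex matrix. Set C := A₀ + ⋯ + A_{q−1} and B := B₀ + ⋯ + B_{q−1}. Then σ(C) = σ(B) ∪ {0}, and for every λ ∈ ℂ \ {0} the size of the largest Jordan block of C associated with λ equals the size of the largest Jordan block of B associated with λ. -/
import Mathlib


open scoped BigOperators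

-- Auxiliary: polynomial evaluation preserves block upper-triangular structure.
lemma aeval_fromBlocks_aux {n p : Type*} [Fintype n] [Fintype p] [DecidableEq n] [DecidableEq p]
    (Jm : Matrix n n ℂ) (T : Matrix n p ℂ) (Bm : Matrix p p ℂ) (f : Polynomial ℂ) :
    ∃ X : Matrix n p ℂ, Polynomial.aeval (Matrix.fromBlocks Jm T 0 Bm) f =
      Matrix.fromBlocks (Polynomial.aeval Jm f) X 0 (Polynomial.aeval Bm f) := by
  induction f using Polynomial.induction_on with
  | C a =>
      refine ⟨0, ?_⟩
      simp only [Polynomial.aeval_C, Algebra.algebraMap_eq_smul_one, ← Matrix.fromBlocks_one]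
      rw [Matrix.fromBlocks_smul]
      simp
  | add f g hf hg =>
      obtain ⟨X, hX⟩ := hf
      obtain ⟨Y, hY⟩ := hg
      exact ⟨X + Y, by simp [hX, hY, Matrix.fromBlocks_add]⟩
  | monomial k a h =>
      obtain ⟨X, hX⟩ := h
      refine ⟨(Polynomial.aeval Jm (Polynomial.C a * Polynomial.X ^ k)) * T + X * Bm, ?_⟩
      have heq : (Polynomial.C a * Polynomial.X ^ (k + 1) : Polynomial ℂ)
          = (Polynomial.C a * Polynomial.X ^ k) * Polynomial.X := by ring
      have e1 := _root_.map_mul (Polynomial.aeval (Matrix.fromBlocks Jm T 0 Bm))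
        (Polynomial.C a * Polynomial.X ^ k) Polynomial.X
      have e2 := _root_.map_mul (Polynomial.aeval Jm)
        (Polynomial.C a * Polynomial.X ^ k) Polynomial.X
      have e3 := _root_.map_mul (Polynomial.aeval Bm)
        (Polynomial.C a * Polynomial.X ^ k) Polynomial.X
      rw [heq, e1, e2, e3, hX, Polynomial.aeval_X, Polynomial.aeval_X,
        Polynomial.aeval_X, Matrix.fromBlocks_multiply]
      simp

-- Auxiliary: a complex square matrix's spectrum is the root set of its minimal polynomial.
lemma mem_spectrum_iff_isRoot_minpoly {n : Type*} [Fintype n] [DecidableEq n]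
    (M : Matrix n n ℂ) (μ : ℂ) :
    μ ∈ spectrum ℂ M ↔ (minpoly ℂ M).IsRoot μ := by
  rw [← AlgEquiv.spectrum_eq (Matrix.toLinAlgEquiv (Pi.basisFun ℂ n)) M,
    ← Module.End.hasEigenvalue_iff_mem_spectrum, Module.End.hasEigenvalue_iff_isRoot,
    minpoly.algEquiv_eq]

-- Auxiliary: strictly upper-triangular matrices are nilpotent.
lemma strictUpper_pow_zero {K : ℕ} (J : Matrix (Fin K) (Fin K) ℂ)
    (hJ : ∀ a b : Fin K, b ≤ a → J a b = 0) :
    ∀ k : ℕ, ∀ a b : Fin K, (b : ℕ) < (a : ℕ) + k → (J ^ k) a b = 0 := by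
  intro k
  induction k with
  | zero =>
      intro a b hab
      have hne : a ≠ b := by intro h; subst h; omega
      simp [Matrix.one_apply_ne hne]
  | succ k ih =>
      intro a b hab
      rw [pow_succ, Matrix.mul_apply]
      apply Finset.sum_eq_zero
      intro c _
      by_cases hc : b ≤ c
      · rw [hJ c b hc, mul_zero]
      · rw [ih a c (by omega), zero_mul]

/-- **Proposition (spectrum in the special case).**

Let `q ≥ 2` and `m ≥ 1` be integers and `K = (q^m − 1)/(q − 1)`.  For
`0 ≤ r < q` let `A_r = [[J_{r0}, J_{r1}], [0, B_r]]` be a block matrix where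
`J_{r0}` is a `K × K` upper triangular matrix with zero diagonal, `J_{r1}` is a
`K × q^m` matrix and `B_r` is a `q^m × q^m` matrix.  With `C = Σ_r A_r` and
`B = Σ_r B_r` we have `σ(C) = σ(B) ∪ {0}`, and for every `λ ≠ 0` the largest
Jordan block sizes (`=` root multiplicities in the minimal polynomials) of `C`
and `B` associated with `λ` agree. -/
theorem spectrum_special_case
    (q m K : ℕ) (hq : 2 ≤ q) (hm : 1 ≤ m) (hK : K = (q ^ m - 1) / (q - 1))
    (J0 : Fin q → Matrix (Fin K) (Fin K) ℂ)
    (hJ0 : ∀ r : Fin q, ∀ a b : Fin K, b ≤ a → J0 r a b = 0)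
    (J1 : Fin q → Matrix (Fin K) (Fin (q ^ m)) ℂ)
    (B : Fin q → Matrix (Fin (q ^ m)) (Fin (q ^ m)) ℂ)
    (A : Fin q → Matrix (Fin K ⊕ Fin (q ^ m)) (Fin K ⊕ Fin (q ^ m)) ℂ)
    (hA : ∀ r : Fin q, A r = Matrix.fromBlocks (J0 r) (J1 r) 0 (B r))
    (C : Matrix (Fin K ⊕ Fin (q ^ m)) (Fin K ⊕ Fin (q ^ m)) ℂ)
    (hC : C = ∑ r : Fin q, A r) :
    spectrum ℂ C = spectrum ℂ (∑ r : Fin q, B r) ∪ {0} ∧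
    ∀ μ : ℂ, μ ≠ 0 →
      Polynomial.rootMultiplicity μ (minpoly ℂ C)
        = Polynomial.rootMultiplicity μ (minpoly ℂ (∑ r : Fin q, B r)) := by
  classical
  set Bs : Matrix (Fin (q ^ m)) (Fin (q ^ m)) ℂ := ∑ r : Fin q, B r with hBs
  set J : Matrix (Fin K) (Fin K) ℂ := ∑ r : Fin q, J0 r with hJdef
  set T : Matrix (Fin K) (Fin (q ^ m)) ℂ := ∑ r : Fin q, J1 r with hTdef
  -- K ≥ 1
  have hq1 : q ≤ q ^ m := Nat.le_self_pow (by omega) q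
  have hK1 : 1 ≤ K := by
    subst hK
    rw [Nat.one_le_div_iff (by omega)]
    omega
  -- strict upper triangularity of J
  have hJ : ∀ a b : Fin K, b ≤ a → J a b = 0 := by
    intro a b hab
    simp only [hJdef, Matrix.sum_apply]
    exact Finset.sum_eq_zero fun r _ => hJ0 r a b hab
  -- block form of C
  have hCblk : C = Matrix.fromBlocks J T 0 Bs := by
    rw [hC]
    ext i j
    cases i <;> cases j <;>
      simp [hA, Matrix.sum_apply, hJdef, hTdef, hBs]
  -- nilpotency
  have hNilp : J ^ K = 0 := by
    ext a b
    rw [Matrix.zero_apply]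
    exact strictUpper_pow_zero J hJ K a b (by have := b.isLt; omega)
  -- integrality and nonvanishing of minimal polynomials
  have hIntC : IsIntegral ℂ C := ⟨C.charpoly, C.charpoly_monic, C.aeval_self_charpoly⟩
  have hIntB : IsIntegral ℂ Bs := ⟨Bs.charpoly, Bs.charpoly_monic, Bs.aeval_self_charpoly⟩
  have hne : minpoly ℂ C ≠ 0 := minpoly.ne_zero hIntC
  have hneB : minpoly ℂ Bs ≠ 0 := minpoly.ne_zero hIntB
  -- divisibility 1 : minpoly Bs ∣ minpoly C
  obtain ⟨X1, hX1⟩ := aeval_fromBlocks_aux J T Bs (minpoly ℂ C)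
  have hBz : Polynomial.aeval Bs (minpoly ℂ C) = 0 := by
    have h0 : Polynomial.aeval (Matrix.fromBlocks J T 0 Bs) (minpoly ℂ C) = 0 := by
      rw [← hCblk]; exact minpoly.aeval ℂ C
    rw [hX1] at h0
    ext i j
    have := Matrix.ext_iff.mpr h0 (Sum.inr i) (Sum.inr j)
    simpa using this
  have hdvd1 : minpoly ℂ Bs ∣ minpoly ℂ C := minpoly.dvd ℂ Bs hBz
  -- divisibility 2 : minpoly C ∣ X^K * minpoly Bs
  obtain ⟨S, hS⟩ := aeval_fromBlocks_aux J T Bs (Polynomial.X ^ K)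
  obtain ⟨Y, hY⟩ := aeval_fromBlocks_aux J T Bs (minpoly ℂ Bs)
  have hCpow : (Matrix.fromBlocks J T 0 Bs) ^ K = Matrix.fromBlocks 0 S 0 (Bs ^ K) := by
    rw [map_pow, map_pow, map_pow, Polynomial.aeval_X, Polynomial.aeval_X,
      Polynomial.aeval_X] at hS
    rw [hS, hNilp]
  have hAe : Polynomial.aeval (Matrix.fromBlocks J T 0 Bs) (minpoly ℂ Bs)
      = Matrix.fromBlocks (Polynomial.aeval J (minpoly ℂ Bs)) Y 0 0 := by
    rw [hY, minpoly.aeval]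
  have hzero2 : Polynomial.aeval C (Polynomial.X ^ K * minpoly ℂ Bs) = 0 := by
    rw [hCblk, _root_.map_mul, map_pow, Polynomial.aeval_X, hCpow, hAe,
      Matrix.fromBlocks_multiply]
    simp
  have hdvd2 : minpoly ℂ C ∣ Polynomial.X ^ K * minpoly ℂ Bs := minpoly.dvd ℂ C hzero2
  -- 0 is in the spectrum of C
  have hdetJ : J.det = 0 := by
    rw [Matrix.det_of_upperTriangular (fun i j hij => hJ i j hij.le)]
    exact Finset.prod_eq_zero (Finset.mem_univ (⟨0, hK1⟩ : Fin K)) (hJ _ _ le_rfl)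
  have hdetC : C.det = 0 := by
    rw [hCblk, Matrix.det_fromBlocks_zero₂₁, hdetJ, zero_mul]
  have h0mem : (0 : ℂ) ∈ spectrum ℂ C := by
    rw [spectrum.zero_mem_iff]
    intro h
    have := (Matrix.isUnit_iff_isUnit_det C).mp h
    rw [hdetC] at this
    exact this.ne_zero rfl
  refine ⟨?_, ?_⟩
  · ext μ
    simp only [Set.mem_union, Set.mem_singleton_iff]
    rw [mem_spectrum_iff_isRoot_minpoly, mem_spectrum_iff_isRoot_minpoly]
    constructor
    · intro h
      obtain ⟨g, hg⟩ := hdvd2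
      have hroot : (Polynomial.X ^ K * minpoly ℂ Bs).IsRoot μ := by
        rw [hg]
        simp only [Polynomial.IsRoot, Polynomial.eval_mul]
        rw [h.eq_zero, zero_mul]
      simp only [Polynomial.IsRoot, Polynomial.eval_mul, Polynomial.eval_pow,
        Polynomial.eval_X, mul_eq_zero] at hroot
      rcases hroot with h1 | h2
      · right
        exact pow_eq_zero_iff (by omega : K ≠ 0) |>.mp h1
      · left
        exact h2
    · rintro (h | rfl)
      · exact h.dvd hdvd1
      · exact (mem_spectrum_iff_isRoot_minpoly C 0).mp h0mem
  · intro μ hμ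
    have hXKp : Polynomial.X ^ K * minpoly ℂ Bs ≠ 0 :=
      mul_ne_zero (pow_ne_zero _ Polynomial.X_ne_zero) hneB
    apply le_antisymm
    · have h1 : Polynomial.rootMultiplicity μ (minpoly ℂ C)
          ≤ Polynomial.rootMultiplicity μ (Polynomial.X ^ K * minpoly ℂ Bs) := by
        rw [Polynomial.le_rootMultiplicity_iff hXKp]
        exact dvd_trans (Polynomial.pow_rootMultiplicity_dvd _ _) hdvd2
      have hz : Polynomial.rootMultiplicity μ ((Polynomial.X : Polynomial ℂ) ^ K) = 0 :=
        Polynomial.rootMultiplicity_eq_zero (by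
          simpa [Polynomial.IsRoot] using pow_ne_zero K hμ)
      rw [Polynomial.rootMultiplicity_mul hXKp, hz, zero_add] at h1
      exact h1
    · rw [Polynomial.le_rootMultiplicity_iff hne]
      exact dvd_trans (Polynomial.pow_rootMultiplicity_dvd _ _) hdvd1
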